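/- Let V be a negative definite real quadratic space, E ⊂ V finite, and suppose v ∈ V satisfies ⟨v,w⟩ ≠ 0 for all w ∈ E. Let D = min_{w∈E} dist(v, w^⊥) > 0 (distance with respect to −q). Then |ŝgn_E(v) − sgn_E(v)| ≪ D^{d−2} exp(−4πD²) for D ≥ 1, where d = dim V, i.e., the smoothed sign converges square-exponentially to the sign product away from the walls. -/

import Mathlib

open MeasureTheory Real
noncomputable section

/-- The bilinear form `⟨v,w⟩ = −⟪v,w⟫` of the negative definite quadratic space
`(ℝ^d, q)` with `q v = −‖v‖²`, realized on Euclidean space. -/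
def negB {d : ℕ} (v w : EuclideanSpace ℝ (Fin d)) : ℝ := -(inner ℝ v w : ℝ)

/-- `sgn_E(v) = ∏_{w ∈ E} sgn⟨v,w⟩`, with `sgn 0 = 0`. -/
def sgnProd {d : ℕ} (E : Finset (EuclideanSpace ℝ (Fin d)))
    (v : EuclideanSpace ℝ (Fin d)) : ℝ :=
  ∏ w ∈ E, Real.sign (negB v w)

/-- The sector `S_E(v)` opposite to `v` with respect to the walls corresponding to `E`. -/
def oppSector {d : ℕ} (E : Finset (EuclideanSpace ℝ (Fin d)))
    (v : EuclideanSpace ℝ (Fin d)) : Set (EuclideanSpace ℝ (Fin d)) :=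
  {v' | ∀ w ∈ E, Real.sign (negB v' w) ≠ Real.sign (negB v w)}

/-- The smoothed volume `vôl_E(v)`; the Gaussian is `exp(4π q(v'−v)) = exp(−4π‖v'−v‖²)`
and the measure is the Lebesgue measure associated with `−q`. -/
def smoothVol {d : ℕ} (E : Finset (EuclideanSpace ℝ (Fin d)))
    (v : EuclideanSpace ℝ (Fin d)) : ℝ :=
  (∫ v' in oppSector E v, Real.exp (-(4 * π) * ‖v' - v‖ ^ 2)) /
    ∫ v' : EuclideanSpace ℝ (Fin d), Real.exp (-(4 * π) * ‖v'‖ ^ 2)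

/-- The smoothed sign `ŝgn_E(v)`, the normalized Gaussian convolution of `sgn_E`. -/
def smoothSgn {d : ℕ} (E : Finset (EuclideanSpace ℝ (Fin d)))
    (v : EuclideanSpace ℝ (Fin d)) : ℝ :=
  (∫ v' : EuclideanSpace ℝ (Fin d), sgnProd E v' * Real.exp (-(4 * π) * ‖v' - v‖ ^ 2)) /
    ∫ v' : EuclideanSpace ℝ (Fin d), Real.exp (-(4 * π) * ‖v'‖ ^ 2)

/-! Since `u ↦ ⟨u, w⟩` cannot change sign before `u` reaches the wall `w^⊥`, `sgn_E` is constant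
on the ball of radius `D` around `v`. So `ŝgn_E(v) - sgn_E(v)` is at most twice the mass of the
normalized Gaussian `exp (-4π‖u‖²)` outside the ball of radius `D`, which in polar coordinates is
`≪ ∫_D^∞ r^(d-1) exp (-4πr²) dr ≪ D^(d-2) exp (-4πD²)`. -/

open Set Metric Finset Module
open scoped Nat

section GaussianTail

variable {a : ℝ}

lemma one_add_pow_le_mul_exp (ha : 0 < a) (k : ℕ) {s : ℝ} (hs : 0 ≤ s) :
    (1 + s) ^ k ≤ k ! * exp a / a ^ k * exp (a * s) := by
  have h := pow_div_factorial_le_exp (x := a * (1 + s)) (by positivity) k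
  rw [mul_pow, div_le_iff₀ (by positivity), mul_add, mul_one, exp_add] at h
  rw [div_mul_eq_mul_div, le_div_iff₀ (by positivity)]
  linarith

/-- The exponential `exp (-a D r)` agrees with the Gaussian `exp (-a r²)` at `r = D` and integrates
over `(D, ∞)` to `exp (-a D²) / (a D)`: this is where the factor `D ^ (k - 1)` of the tail bound
comes from. -/
lemma pow_mul_exp_neg_mul_sq_le (ha : 0 < a) (k : ℕ) {D r : ℝ} (hD : 1 ≤ D) (hr : D ≤ r) :
    r ^ k * exp (-a * r ^ 2) ≤ k ! * exp a / a ^ k * D ^ k * exp (-(a * D) * r) := by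
  have hr_le : r ≤ D * (1 + (r - D)) := by nlinarith
  have hexp : exp (a * (r - D)) * exp (-a * r ^ 2) ≤ exp (-(a * D) * r) := by
    rw [← exp_add, exp_le_exp]
    nlinarith [mul_nonneg ha.le (mul_nonneg (sub_nonneg.2 hr) (by linarith : (0 : ℝ) ≤ r - 1))]
  calc r ^ k * exp (-a * r ^ 2)
      ≤ D ^ k * (1 + (r - D)) ^ k * exp (-a * r ^ 2) := by
        rw [← mul_pow]
        gcongr
        linarith
    _ ≤ D ^ k * (k ! * exp a / a ^ k * exp (a * (r - D))) * exp (-a * r ^ 2) := by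
        gcongr
        exact one_add_pow_le_mul_exp ha k (by linarith)
    _ = k ! * exp a / a ^ k * D ^ k * (exp (a * (r - D)) * exp (-a * r ^ 2)) := by ring
    _ ≤ k ! * exp a / a ^ k * D ^ k * exp (-(a * D) * r) := by gcongr

lemma integral_Ioi_pow_mul_exp_neg_mul_sq_le (ha : 0 < a) (k : ℕ) {D : ℝ} (hD : 1 ≤ D) :
    ∫ r in Ioi D, r ^ k * exp (-a * r ^ 2) ≤
      k ! * exp a / a ^ (k + 1) * D ^ ((k : ℝ) - 1) * exp (-a * D ^ 2) := by
  have hD0 : 0 < D := by linarith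
  have hrate : -(a * D) < 0 := by nlinarith
  calc ∫ r in Ioi D, r ^ k * exp (-a * r ^ 2)
      ≤ ∫ r in Ioi D, k ! * exp a / a ^ k * D ^ k * exp (-(a * D) * r) := by
        refine integral_mono_of_nonneg ?_ ((integrableOn_exp_mul_Ioi hrate D).const_mul _) ?_
        · filter_upwards [ae_restrict_mem measurableSet_Ioi] with r hr
          have : 0 < r := hD0.trans hr
          positivity
        · filter_upwards [ae_restrict_mem measurableSet_Ioi] with r hr
          exact pow_mul_exp_neg_mul_sq_le ha k hD (le_of_lt hr)
    _ = k ! * exp a / a ^ (k + 1) * D ^ ((k : ℝ) - 1) * exp (-a * D ^ 2) := by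
        rw [integral_const_mul, integral_exp_mul_Ioi hrate, rpow_sub_one hD0.ne', rpow_natCast]
        field_simp
        ring

variable {F : Type*} [NormedAddCommGroup F] [NormedSpace ℝ F] [FiniteDimensional ℝ F]
  [MeasurableSpace F] [BorelSpace F] (μ : Measure F) [μ.IsAddHaarMeasure]

lemma setIntegral_norm_ge_eq_integral_Ioi [Nontrivial F] (g : ℝ → ℝ) {D : ℝ} (hD : 0 < D) :
    ∫ x in {x : F | D ≤ ‖x‖}, g ‖x‖ ∂μ =
      finrank ℝ F * μ.real (ball 0 1) * ∫ r in Ioi D, r ^ (finrank ℝ F - 1) * g r := by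
  have hshell : ∫ x in {x : F | D ≤ ‖x‖}, g ‖x‖ ∂μ = ∫ x, indicator (Ici D) g ‖x‖ ∂μ := by
    rw [← integral_indicator (isClosed_le continuous_const continuous_norm).measurableSet]
    rfl
  rw [hshell, integral_fun_norm_addHaar μ, nsmul_eq_mul, smul_eq_mul, mul_assoc]
  congr 2
  calc ∫ r in Ioi 0, r ^ (finrank ℝ F - 1) • indicator (Ici D) g r
      = ∫ r in Ioi 0, indicator (Ici D) (fun r => r ^ (finrank ℝ F - 1) * g r) r := by
        simp only [smul_eq_mul, indicator_mul_right]
    _ = ∫ r in Ici D, r ^ (finrank ℝ F - 1) * g r := by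
        rw [setIntegral_indicator measurableSet_Ici, inter_eq_right.2 (Ici_subset_Ioi.2 hD)]
    _ = ∫ r in Ioi D, r ^ (finrank ℝ F - 1) * g r := integral_Ici_eq_integral_Ioi

lemma exists_setIntegral_norm_ge_exp_neg_mul_sq_le (ha : 0 < a) :
    ∃ C, 0 < C ∧ ∀ D, 1 ≤ D → ∫ x in {x : F | D ≤ ‖x‖}, exp (-a * ‖x‖ ^ 2) ∂μ ≤
      C * D ^ ((finrank ℝ F : ℝ) - 2) * exp (-a * D ^ 2) := by
  rcases subsingleton_or_nontrivial F with hF | hF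
  · refine ⟨1, one_pos, fun D hD => ?_⟩
    have hempty : {x : F | D ≤ ‖x‖} = ∅ := eq_empty_of_forall_notMem fun x (hx : D ≤ ‖x‖) => by
      rw [Subsingleton.elim x 0, norm_zero] at hx
      linarith
    rw [hempty, setIntegral_empty]
    positivity
  set n := finrank ℝ F
  have hn : 1 ≤ n := finrank_pos
  have hball : 0 < μ.real (ball 0 1) :=
    ENNReal.toReal_pos (measure_ball_pos μ 0 one_pos).ne' measure_ball_lt_top.ne
  refine ⟨n * μ.real (ball 0 1) * ((n - 1) ! * exp a / a ^ n), by positivity, fun D hD => ?_⟩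
  have htail := integral_Ioi_pow_mul_exp_neg_mul_sq_le ha (n - 1) hD
  rw [Nat.sub_add_cancel hn, Nat.cast_sub hn, Nat.cast_one, sub_sub, one_add_one_eq_two] at htail
  calc ∫ x in {x : F | D ≤ ‖x‖}, exp (-a * ‖x‖ ^ 2) ∂μ
      = n * μ.real (ball 0 1) * ∫ r in Ioi D, r ^ (n - 1) * exp (-a * r ^ 2) :=
        setIntegral_norm_ge_eq_integral_Ioi μ (fun r => exp (-a * r ^ 2)) (by linarith)
    _ ≤ n * μ.real (ball 0 1) * ((n - 1) ! * exp a / a ^ n * D ^ ((n : ℝ) - 2) *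
          exp (-a * D ^ 2)) := by gcongr
    _ = _ := by ring

end GaussianTail

lemma Real.sign_eq_sign_of_isPreconnected {X : Type*} [TopologicalSpace X] {s : Set X}
    (hs : IsPreconnected s) {f : X → ℝ} (hf : ContinuousOn f s) (hf0 : ∀ x ∈ s, f x ≠ 0)
    {x y : X} (hx : x ∈ s) (hy : y ∈ s) : Real.sign (f x) = Real.sign (f y) := by
  have no_sign_change : ∀ x ∈ s, ∀ y ∈ s, f x < 0 → ¬ 0 < f y := fun x hx y hy hx' hy' => by
    obtain ⟨z, hz, hz0⟩ := hs.intermediate_value hx hy hf ⟨hx'.le, hy'.le⟩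
    exact hf0 z hz hz0
  rcases (hf0 x hx).lt_or_gt with hx' | hx' <;> rcases (hf0 y hy).lt_or_gt with hy' | hy'
  · rw [sign_of_neg hx', sign_of_neg hy']
  · exact (no_sign_change x hx y hy hx' hy').elim
  · exact (no_sign_change y hy x hx hy' hx').elim
  · rw [sign_of_pos hx', sign_of_pos hy']

lemma Real.sign_eq_sign_of_dist_lt_infDist {F : Type*} [NormedAddCommGroup F] [NormedSpace ℝ F]
    {f : F → ℝ} (hf : Continuous f) {x y : F} (hy : dist y x < infDist x {u | f u = 0}) :
    Real.sign (f y) = Real.sign (f x) :=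
  Real.sign_eq_sign_of_isPreconnected (convex_ball x _).isPreconnected hf.continuousOn
    (fun _ hu => notMem_of_dist_lt_infDist (s := {u | f u = 0}) (mem_ball'.1 hu)) hy
    (mem_ball_self (dist_nonneg.trans_lt hy))

lemma continuous_negB_left {d : ℕ} (w : EuclideanSpace ℝ (Fin d)) :
    Continuous fun v => negB v w := by
  unfold negB
  fun_prop

lemma sgnProd_eq_of_dist_lt_infDist {d : ℕ} {E : Finset (EuclideanSpace ℝ (Fin d))}
    {v v' : EuclideanSpace ℝ (Fin d)}
    (h : ∀ w ∈ E, dist v' v < infDist v {u | negB u w = 0}) :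
    sgnProd E v' = sgnProd E v :=
  prod_congr rfl fun w hw => Real.sign_eq_sign_of_dist_lt_infDist (continuous_negB_left w) (h w hw)

lemma abs_sgnProd_le_one {d : ℕ} (E : Finset (EuclideanSpace ℝ (Fin d)))
    (v : EuclideanSpace ℝ (Fin d)) : |sgnProd E v| ≤ 1 := by
  rw [sgnProd, abs_prod]
  refine prod_le_one (fun _ _ => abs_nonneg _) fun w _ => ?_
  rcases Real.sign_apply_eq (negB v w) with h | h | h <;> simp [h]

lemma Real.measurable_sign : Measurable Real.sign := by
  unfold Real.sign
  exact measurable_const.ite measurableSet_Iio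
    (measurable_const.ite measurableSet_Ioi measurable_const)

lemma measurable_sgnProd {d : ℕ} (E : Finset (EuclideanSpace ℝ (Fin d))) :
    Measurable (sgnProd E) :=
  Finset.measurable_prod _ fun w _ => measurable_sign.comp (continuous_negB_left w).measurable

section Smoothing

variable {G : Type*} [NormedAddCommGroup G] [MeasurableSpace G] [BorelSpace G] {μ : Measure G}
  [μ.IsAddRightInvariant]

lemma abs_integral_sub_mul_comp_sub_le {f g : G → ℝ} (hf1 : ∀ x, |f x| ≤ 1)
    (hg0 : ∀ u, 0 ≤ g u) (hg : Integrable g μ) {v : G} {D : ℝ}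
    (hfD : ∀ x, dist x v < D → f x = f v) :
    |∫ x, (f x - f v) * g (x - v) ∂μ| ≤ 2 * ∫ u in {u | D ≤ ‖u‖}, g u ∂μ := by
  have hS : MeasurableSet {u : G | D ≤ ‖u‖} :=
    (isClosed_le continuous_const continuous_norm).measurableSet
  have hbound : ∀ x, |(f x - f v) * g (x - v)| ≤
      indicator {u | D ≤ ‖u‖} (fun u => 2 * g u) (x - v) := fun x => by
    by_cases hx : D ≤ ‖x - v‖
    · rw [indicator_of_mem (show x - v ∈ {u | D ≤ ‖u‖} from hx), abs_mul, abs_of_nonneg (hg0 _)]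
      exact mul_le_mul_of_nonneg_right (by linarith [abs_sub (f x) (f v), hf1 x, hf1 v]) (hg0 _)
    · rw [indicator_of_notMem (show x - v ∉ {u | D ≤ ‖u‖} from hx),
        hfD x (by rw [dist_eq_norm]; exact not_le.1 hx), sub_self, zero_mul, abs_zero]
  calc |∫ x, (f x - f v) * g (x - v) ∂μ|
      ≤ ∫ x, |(f x - f v) * g (x - v)| ∂μ := abs_integral_le_integral_abs
    _ ≤ ∫ x, indicator {u | D ≤ ‖u‖} (fun u => 2 * g u) (x - v) ∂μ :=
        integral_mono_of_nonneg (.of_forall fun _ => abs_nonneg _)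
          (((hg.const_mul 2).indicator hS).comp_sub_right v) (.of_forall hbound)
    _ = 2 * ∫ u in {u | D ≤ ‖u‖}, g u ∂μ := by
        rw [integral_sub_right_eq_self (indicator {u | D ≤ ‖u‖} fun u => 2 * g u) v,
          integral_indicator hS, integral_const_mul]

end Smoothing

section Gaussian

variable {V : Type*} [NormedAddCommGroup V] [InnerProductSpace ℝ V] [FiniteDimensional ℝ V]
  [MeasurableSpace V] [BorelSpace V] {b : ℝ}

lemma integral_exp_neg_mul_sq_norm_pos (hb : 0 < b) : 0 < ∫ v : V, exp (-b * ‖v‖ ^ 2) := by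
  rw [GaussianFourier.integral_rexp_neg_mul_sq_norm hb]
  positivity

lemma integrable_exp_neg_mul_sq_norm (hb : 0 < b) : Integrable fun v : V => exp (-b * ‖v‖ ^ 2) :=
  .of_integral_ne_zero (integral_exp_neg_mul_sq_norm_pos hb).ne'

end Gaussian

lemma smoothSgn_sub_sgnProd {d : ℕ} (E : Finset (EuclideanSpace ℝ (Fin d)))
    (v : EuclideanSpace ℝ (Fin d)) :
    smoothSgn E v - sgnProd E v =
      (∫ v', (sgnProd E v' - sgnProd E v) * exp (-(4 * π) * ‖v' - v‖ ^ 2)) /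
        ∫ v' : EuclideanSpace ℝ (Fin d), exp (-(4 * π) * ‖v'‖ ^ 2) := by
  have h4π : 0 < 4 * π := by positivity
  have hI := integral_exp_neg_mul_sq_norm_pos (V := EuclideanSpace ℝ (Fin d)) h4π
  have hg := (integrable_exp_neg_mul_sq_norm (V := EuclideanSpace ℝ (Fin d)) h4π).comp_sub_right v
  have hsg : Integrable fun v' => sgnProd E v' * exp (-(4 * π) * ‖v' - v‖ ^ 2) :=
    hg.bdd_mul (measurable_sgnProd E).aestronglyMeasurable
      (.of_forall fun v' => abs_sgnProd_le_one E v')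
  simp_rw [sub_mul]
  rw [integral_sub hsg (hg.const_mul _), integral_const_mul,
    integral_sub_right_eq_self (fun u => exp (-(4 * π) * ‖u‖ ^ 2)) v, sub_div,
    mul_div_cancel_right₀ _ hI.ne', smoothSgn]

/-- away from the walls, the smoothed sign converges square-exponentially to
the sign product: with `D = min_{w∈E} dist(v, w^⊥) ≥ 1` and `⟨v,w⟩ ≠ 0` for all `w ∈ E`,
`|ŝgn_E(v) − sgn_E(v)| ≪ D^(d−2) exp(−4πD²)`. -/
theorem smoothSgn_sub_sgn_tail (d : ℕ) (E : Finset (EuclideanSpace ℝ (Fin d)))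
    (hE : E.Nonempty) :
    ∃ C : ℝ, 0 < C ∧ ∀ v : EuclideanSpace ℝ (Fin d),
      (∀ w ∈ E, negB v w ≠ 0) →
      1 ≤ E.inf' hE (fun w => Metric.infDist v {u : EuclideanSpace ℝ (Fin d) | negB u w = 0}) →
      |smoothSgn E v - sgnProd E v| ≤
        C * (E.inf' hE fun w =>
              Metric.infDist v {u : EuclideanSpace ℝ (Fin d) | negB u w = 0}) ^ ((d : ℝ) - 2) *
          Real.exp (-(4 * π) *
            (E.inf' hE fun w =>
              Metric.infDist v {u : EuclideanSpace ℝ (Fin d) | negB u w = 0}) ^ 2) := by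
  have h4π : 0 < 4 * π := by positivity
  obtain ⟨C, hC, htail⟩ := exists_setIntegral_norm_ge_exp_neg_mul_sq_le
    (volume : Measure (EuclideanSpace ℝ (Fin d))) h4π
  rw [finrank_euclideanSpace_fin] at htail
  have hI := integral_exp_neg_mul_sq_norm_pos (V := EuclideanSpace ℝ (Fin d)) h4π
  refine ⟨2 * C / ∫ v', exp (-(4 * π) * ‖v'‖ ^ 2), by positivity, fun v _ hD => ?_⟩
  set D := E.inf' hE fun w => infDist v {u : EuclideanSpace ℝ (Fin d) | negB u w = 0}
  have hsmooth := abs_integral_sub_mul_comp_sub_le (μ := volume) (v := v) (D := D)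
    (abs_sgnProd_le_one E) (fun u => (exp_pos _).le) (integrable_exp_neg_mul_sq_norm h4π)
    (fun v' hv' => sgnProd_eq_of_dist_lt_infDist ((lt_inf'_iff hE).1 hv'))
  calc |smoothSgn E v - sgnProd E v|
      = |∫ v', (sgnProd E v' - sgnProd E v) * exp (-(4 * π) * ‖v' - v‖ ^ 2)| /
          ∫ v', exp (-(4 * π) * ‖v'‖ ^ 2) := by
        rw [smoothSgn_sub_sgnProd, abs_div, abs_of_pos hI]
    _ ≤ 2 * (C * D ^ ((d : ℝ) - 2) * exp (-(4 * π) * D ^ 2)) /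
          ∫ v', exp (-(4 * π) * ‖v'‖ ^ 2) := by
        gcongr
        exact hsmooth.trans (by gcongr; exact htail D hD)
    _ = _ := by ring
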